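/- arXiv:1801.09922 — 8 statements merged into one kernel-verified Lean document; each statement's English description precedes it below -/
import Mathlib

section
/- Let F : Y → [0, +∞] be a proper convex function that is sequentially lower semicontinuous with respect to the weak topology of Y, and let J : X → [0, +∞] be proper, convex and sequentially lower semicontinuous with respect to the weak-* topology of X. Assume: (i) there exists ũ ∈ X with F(Kũ) + J(ũ) < ∞, and (ii) for every a, b ≥ 0 the set {u ∈ X : F(Ku) ≤ a and J(u) ≤ b} is bounded in the dual norm of X. Then the functional Φ(u) := F(Ku) + J(u) attains its infimum over X, and the set of minimizers of Φ is a convex subset of X. -/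
open scoped ENNReal RealInnerProductSpace Topology
open Filter

/-!
The direct method of the calculus of variations. Take a minimizing sequence of
`Φ u = F (K u) + J u` along which `Φ` stays below a finite constant; by the coercivity
hypothesis it is norm-bounded, so by the sequential Banach–Alaoglu theorem (here `Z` is
separable) a subsequence converges weak-* to some `u₀`. Its image under `K` then converges
weakly, and lower semicontinuity of `F` and `J` gives `Φ u₀ ≤ inf Φ`. Convexity of the set of
minimizers follows from convexity of `Φ`, since `K` is linear.
-/

section ConvexENNReal

variable {E : Type*} [AddCommGroup E] [Module ℝ E]

/-- `ConvexOn ℝ` does not apply: `ℝ≥0∞` is not an `ℝ`-module. -/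
def ConvexENNReal (f : E → ℝ≥0∞) : Prop :=
  ∀ x y : E, ∀ t : ℝ, 0 ≤ t → t ≤ 1 →
    f (t • x + (1 - t) • y) ≤ ENNReal.ofReal t * f x + ENNReal.ofReal (1 - t) * f y

theorem ConvexENNReal.add {f g : E → ℝ≥0∞} (hf : ConvexENNReal f) (hg : ConvexENNReal g) :
    ConvexENNReal (f + g) := fun x y t ht₀ ht₁ =>
  calc (f + g) (t • x + (1 - t) • y)
      ≤ (ENNReal.ofReal t * f x + ENNReal.ofReal (1 - t) * f y)
        + (ENNReal.ofReal t * g x + ENNReal.ofReal (1 - t) * g y) :=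
        add_le_add (hf x y t ht₀ ht₁) (hg x y t ht₀ ht₁)
    _ = ENNReal.ofReal t * (f + g) x + ENNReal.ofReal (1 - t) * (f + g) y := by
        simp only [Pi.add_apply]; ring

theorem ConvexENNReal.comp_isLinearMap {E' : Type*} [AddCommGroup E'] [Module ℝ E']
    {f : E' → ℝ≥0∞} (hf : ConvexENNReal f) {g : E → E'} (hg : IsLinearMap ℝ g) :
    ConvexENNReal (f ∘ g) := fun x y t ht₀ ht₁ => by
  simpa only [Function.comp_apply, hg.map_add, hg.map_smul] using hf (g x) (g y) t ht₀ ht₁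

theorem ConvexENNReal.convex_setOf_forall_le {f : E → ℝ≥0∞} (hf : ConvexENNReal f) :
    Convex ℝ {x | ∀ w, f x ≤ f w} := by
  rintro x hx y hy a b ha hb hab w
  obtain rfl : b = 1 - a := by linarith
  calc f (a • x + (1 - a) • y)
      ≤ ENNReal.ofReal a * f x + ENNReal.ofReal (1 - a) * f y := hf x y a ha (by linarith)
    _ ≤ ENNReal.ofReal a * f w + ENNReal.ofReal (1 - a) * f w := by gcongr; exacts [hx w, hy w]
    _ = f w := by rw [← add_mul, ← ENNReal.ofReal_add ha hb, add_sub_cancel, ENNReal.ofReal_one,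
        one_mul]

end ConvexENNReal

theorem exists_seq_le_tendsto_iInf {X : Type*} (Φ : X → ℝ≥0∞) (h : ∃ x, Φ x < ⊤) :
    ∃ (u : ℕ → X) (c : ℝ≥0∞), c ≠ ⊤ ∧ (∀ n, Φ (u n) ≤ c) ∧
      Tendsto (Φ ∘ u) atTop (𝓝 (⨅ x, Φ x)) := by
  obtain ⟨x₀, hx₀⟩ := h
  obtain ⟨v, hv_anti, hv_lim, hv_mem⟩ :=
    exists_seq_tendsto_sInf ⟨_, Set.mem_range_self x₀⟩ (OrderBot.bddBelow (Set.range Φ))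
  choose u hu using hv_mem
  rw [sInf_range] at hv_lim
  have hinf : ⨅ x, Φ x < ⊤ := (iInf_le Φ x₀).trans_lt hx₀
  obtain ⟨N, hN⟩ := (hv_lim.eventually (gt_mem_nhds hinf)).exists_forall_of_atTop
  refine ⟨fun n => u (n + N), v N, (hN N le_rfl).ne, fun n => ?_, ?_⟩
  · rw [hu]
    exact hv_anti (Nat.le_add_left N n)
  · simpa only [Function.comp_def, hu] using (tendsto_add_atTop_iff_nat N).mpr hv_lim

theorem ENNReal.le_liminf_add {ι : Type*} {f : Filter ι} (u v : ι → ℝ≥0∞) :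
    liminf u f + liminf v f ≤ liminf (u + v) f := by
  simp only [liminf_eq_iSup_iInf]
  refine ENNReal.biSup_add_biSup_le' ⟨_, univ_mem⟩ ⟨_, univ_mem⟩ fun s hs t ht => ?_
  refine le_iSup₂_of_le (s ∩ t) (inter_mem hs ht) (le_iInf₂ fun i hi => ?_)
  exact add_le_add (iInf₂_le i hi.1) (iInf₂_le i hi.2)

theorem isLinearMap_of_inner_eq {Z Y : Type*} [NormedAddCommGroup Z] [NormedSpace ℝ Z]
    [NormedAddCommGroup Y] [InnerProductSpace ℝ Y] {L : Y → Z} {K : StrongDual ℝ Z → Y}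
    (hK : ∀ u g, ⟪K u, g⟫ = u (L g)) : IsLinearMap ℝ K where
  map_add u v := ext_inner_right ℝ fun g => by
    simp only [hK, inner_add_left, add_apply]
  map_smul c u := ext_inner_right ℝ fun g => by
    simp only [hK, real_inner_smul_left, smul_apply, smul_eq_mul]

theorem StrongDual.exists_subseq_tendsto_apply_of_norm_le {Z : Type*} [NormedAddCommGroup Z]
    [NormedSpace ℝ Z] [TopologicalSpace.SeparableSpace Z] {u : ℕ → StrongDual ℝ Z} {C : ℝ}
    (hu : ∀ n, ‖u n‖ ≤ C) :
    ∃ (u₀ : StrongDual ℝ Z) (φ : ℕ → ℕ), StrictMono φ ∧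
      ∀ z, Tendsto (fun k => u (φ k) z) atTop (𝓝 (u₀ z)) := by
  obtain ⟨u₀, -, φ, hφ, hlim⟩ := WeakDual.isSeqCompact_closedBall ℝ Z 0 C
    (x := fun n => StrongDual.toWeakDual (u n)) fun n => by simpa using hu n
  exact ⟨WeakDual.toStrongDual u₀, φ, hφ, fun z =>
    ((WeakDual.eval_continuous z).tendsto u₀).comp hlim⟩

theorem stmt_0_general
    {Z : Type*} [NormedAddCommGroup Z] [NormedSpace ℝ Z] [TopologicalSpace.SeparableSpace Z]
    {Y : Type*} [NormedAddCommGroup Y] [InnerProductSpace ℝ Y]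
    (L : Y →L[ℝ] Z)
    (K : StrongDual ℝ Z → Y)
    (hK : ∀ (u : StrongDual ℝ Z) (g : Y), ⟪K u, g⟫ = u (L g))
    (F : Y → ℝ≥0∞)
    (hFconv : ∀ y₁ y₂ : Y, ∀ t : ℝ, 0 ≤ t → t ≤ 1 →
      F (t • y₁ + (1 - t) • y₂) ≤ ENNReal.ofReal t * F y₁ + ENNReal.ofReal (1 - t) * F y₂)
    (hFlsc : ∀ (y : ℕ → Y) (y₀ : Y),
      (∀ g : Y, Tendsto (fun n => ⟪y n, g⟫) atTop (nhds ⟪y₀, g⟫)) →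
      F y₀ ≤ liminf (fun n => F (y n)) atTop)
    (J : StrongDual ℝ Z → ℝ≥0∞)
    (hJconv : ∀ u₁ u₂ : StrongDual ℝ Z, ∀ t : ℝ, 0 ≤ t → t ≤ 1 →
      J (t • u₁ + (1 - t) • u₂) ≤ ENNReal.ofReal t * J u₁ + ENNReal.ofReal (1 - t) * J u₂)
    (hJlsc : ∀ (u : ℕ → StrongDual ℝ Z) (u₀ : StrongDual ℝ Z),
      (∀ z : Z, Tendsto (fun n => u n z) atTop (nhds (u₀ z))) →
      J u₀ ≤ liminf (fun n => J (u n)) atTop)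
    (hfinite : ∃ utilde : StrongDual ℝ Z, F (K utilde) + J utilde < ⊤)
    (hbound : ∀ a b : ℝ≥0∞, a ≠ ⊤ → b ≠ ⊤ →
      ∃ C : ℝ, ∀ u : StrongDual ℝ Z, F (K u) ≤ a → J u ≤ b → ‖u‖ ≤ C) :
    (∃ uhat : StrongDual ℝ Z, ∀ u, F (K uhat) + J uhat ≤ F (K u) + J u)
    ∧ Convex ℝ {u : StrongDual ℝ Z | ∀ w, F (K u) + J u ≤ F (K w) + J w} := by
  set Φ : StrongDual ℝ Z → ℝ≥0∞ := fun u => F (K u) + J u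
  have hΦconv : ConvexENNReal Φ :=
    (ConvexENNReal.comp_isLinearMap hFconv (isLinearMap_of_inner_eq hK)).add hJconv
  refine ⟨?_, hΦconv.convex_setOf_forall_le⟩
  obtain ⟨u, c, hc, huc, hlim⟩ := exists_seq_le_tendsto_iInf Φ hfinite
  obtain ⟨C, hC⟩ := hbound c c hc hc
  obtain ⟨u₀, φ, hφ, hu₀⟩ := StrongDual.exists_subseq_tendsto_apply_of_norm_le fun n =>
    hC (u n) (le_self_add.trans (huc n)) (le_add_self.trans (huc n))
  have hF : F (K u₀) ≤ liminf (fun k => F (K (u (φ k)))) atTop :=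
    hFlsc _ _ fun g => by simpa only [hK] using hu₀ (L g)
  have hJ : J u₀ ≤ liminf (fun k => J (u (φ k))) atTop := hJlsc _ _ hu₀
  refine ⟨u₀, fun w => ?_⟩
  calc Φ u₀ ≤ liminf (fun k => Φ (u (φ k))) atTop :=
      (add_le_add hF hJ).trans (ENNReal.le_liminf_add _ _)
    _ = ⨅ x, Φ x := (hlim.comp hφ.tendsto_atTop).liminf_eq
    _ ≤ Φ w := iInf_le Φ w

/-- **Existence and convexity of minimizers of variational regularization.**
Z is a separable real normed space, X := Z* its dual with the weak-* topology,
Y a real Hilbert space, L : Y → Z bounded linear and K : X → Y defined by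
⟨Ku, g⟩ = u(Lg). F : Y → [0, ∞] is proper, convex and sequentially weakly lower
semicontinuous, J : X → [0, ∞] proper, convex and sequentially weak-* lower
semicontinuous; there is ũ with F(Kũ) + J(ũ) < ∞, and sublevel sets
{u : F(Ku) ≤ a, J(u) ≤ b} are bounded in the dual norm. Then
Φ(u) := F(Ku) + J(u) attains its infimum and its set of minimizers is convex. -/
theorem stmt_0
    {Z : Type*} [NormedAddCommGroup Z] [NormedSpace ℝ Z] [TopologicalSpace.SeparableSpace Z]
    {Y : Type*} [NormedAddCommGroup Y] [InnerProductSpace ℝ Y] [CompleteSpace Y]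
    (L : Y →L[ℝ] Z)
    (K : StrongDual ℝ Z → Y)
    (hK : ∀ (u : StrongDual ℝ Z) (g : Y), ⟪K u, g⟫ = u (L g))
    (F : Y → ℝ≥0∞)
    (hFproper : ∃ y, F y ≠ ⊤)
    (hFconv : ∀ y₁ y₂ : Y, ∀ t : ℝ, 0 ≤ t → t ≤ 1 →
      F (t • y₁ + (1 - t) • y₂) ≤ ENNReal.ofReal t * F y₁ + ENNReal.ofReal (1 - t) * F y₂)
    (hFlsc : ∀ (y : ℕ → Y) (y₀ : Y),
      (∀ g : Y, Tendsto (fun n => ⟪y n, g⟫) atTop (nhds ⟪y₀, g⟫)) →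
      F y₀ ≤ liminf (fun n => F (y n)) atTop)
    (J : StrongDual ℝ Z → ℝ≥0∞)
    (hJproper : ∃ u, J u ≠ ⊤)
    (hJconv : ∀ u₁ u₂ : StrongDual ℝ Z, ∀ t : ℝ, 0 ≤ t → t ≤ 1 →
      J (t • u₁ + (1 - t) • u₂) ≤ ENNReal.ofReal t * J u₁ + ENNReal.ofReal (1 - t) * J u₂)
    (hJlsc : ∀ (u : ℕ → StrongDual ℝ Z) (u₀ : StrongDual ℝ Z),
      (∀ z : Z, Tendsto (fun n => u n z) atTop (nhds (u₀ z))) →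
      J u₀ ≤ liminf (fun n => J (u n)) atTop)
    (hfinite : ∃ utilde : StrongDual ℝ Z, F (K utilde) + J utilde < ⊤)
    (hbound : ∀ a b : ℝ≥0∞, a ≠ ⊤ → b ≠ ⊤ →
      ∃ C : ℝ, ∀ u : StrongDual ℝ Z, F (K u) ≤ a → J u ≤ b → ‖u‖ ≤ C) :
    (∃ uhat : StrongDual ℝ Z, ∀ u, F (K uhat) + J uhat ≤ F (K u) + J u)
    ∧ Convex ℝ {u : StrongDual ℝ Z | ∀ w, F (K u) + J u ≤ F (K w) + J w} :=
  stmt_0_general L K hK F hFconv hFlsc J hJconv hJlsc hfinite hbound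
end

section
/- Let F : Y × Y → [0, +∞] be such that F(·, g) is proper and convex for every g ∈ Y, the joint lower semicontinuity holds (if y_n ⇀ y weakly in Y and g_n → g in norm then F(y, g) ≤ liminf_n F(y_n, g_n)), and g ↦ F(y, g) is norm-continuous for every y ∈ Y. Let J : X → [0, +∞] be proper, convex and sequentially weak-* lower semicontinuous, and assume: (i) for every g ∈ Y there exists u with F(Ku, g) + J(u) < ∞, and (ii) for all a, b, r ≥ 0 the set {u ∈ X : J(u) ≤ b and F(Ku, g) ≤ a for some g with ‖g‖ ≤ r} is norm-bounded. Then for every sequence f_n → f in Y and every choice of minimizers u_n of u ↦ F(Ku, f_n) + J(u), there exists a subsequence (u_{n_k}) converging in the weak-* topology of X to some u* that minimizes u ↦ F(Ku, f) + J(u). -/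
open scoped ENNReal RealInnerProductSpace
open Filter Topology

/-!
Along the minimizers `u n`, the values `F (K (u n)) (f n) + J (u n)` are bounded by those of one
fixed feasible `w₀`, which stay bounded because `F (K w₀) ·` is continuous at `f₀`; the coercivity
hypothesis then bounds `‖u n‖` eventually, and sequential Banach–Alaoglu gives a weak-* convergent
subsequence. Since `K` maps weak-* convergence to weak convergence, the two lower semicontinuity
hypotheses together with the minimality of each `u n` and `f n → f₀` show that the limit is a
minimizer.
-/

theorem ENNReal.liminf_add_liminf_le {ι : Type*} {l : Filter ι} {a b : ι → ℝ≥0∞} :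
    liminf a l + liminf b l ≤ liminf (fun i => a i + b i) l := by
  rcases eq_or_ne (liminf a l) 0 with ha | ha
  · rw [ha, zero_add]
    exact liminf_le_liminf (Eventually.of_forall fun i => le_add_self)
  rcases eq_or_ne (liminf b l) 0 with hb | hb
  · rw [hb, add_zero]
    exact liminf_le_liminf (Eventually.of_forall fun i => le_self_add)
  refine le_of_forall_lt_imp_le_of_dense fun e he => ?_
  obtain ⟨x, hx, y, hy, hexy⟩ := ENNReal.exists_lt_add_of_lt_add he ha hb
  refine hexy.le.trans (le_liminf_of_le (by isBoundedDefault) ?_)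
  filter_upwards [eventually_lt_of_lt_liminf hx, eventually_lt_of_lt_liminf hy] with i hxi hyi
  exact add_le_add hxi.le hyi.le

theorem ENNReal.add_le_of_le_liminf_of_tendsto {ι : Type*} {l : Filter ι} [l.NeBot]
    {a b c : ι → ℝ≥0∞} {a₀ b₀ c₀ : ℝ≥0∞} (ha : a₀ ≤ liminf a l) (hb : b₀ ≤ liminf b l)
    (hle : ∀ᶠ i in l, a i + b i ≤ c i) (hc : Tendsto c l (𝓝 c₀)) : a₀ + b₀ ≤ c₀ :=
  calc a₀ + b₀ ≤ liminf a l + liminf b l := add_le_add ha hb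
    _ ≤ liminf (fun i => a i + b i) l := ENNReal.liminf_add_liminf_le
    _ ≤ liminf c l := liminf_le_liminf hle
    _ = c₀ := hc.liminf_eq

theorem WeakDual.exists_subseq_tendsto_of_frequently_norm_le {𝕜 E : Type*}
    [NontriviallyNormedField 𝕜] [ProperSpace 𝕜] [SeminormedAddCommGroup E] [NormedSpace 𝕜 E]
    [TopologicalSpace.SeparableSpace E] {u : ℕ → StrongDual 𝕜 E} {C : ℝ}
    (hC : ∃ᶠ n in atTop, ‖u n‖ ≤ C) :
    ∃ φ : ℕ → ℕ, StrictMono φ ∧ ∃ u₀ : StrongDual 𝕜 E,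
      ∀ z : E, Tendsto (fun k => u (φ k) z) atTop (𝓝 (u₀ z)) := by
  obtain ⟨u₀, -, φ, hφ, hconv⟩ :=
    (isSeqCompact_closedBall 𝕜 E 0 C).subseq_of_frequently_in (x := fun n => StrongDual.toWeakDual (u n))
      (by simpa using hC)
  exact ⟨φ, hφ, toStrongDual u₀, fun z => ((eval_continuous z).tendsto u₀).comp hconv⟩

theorem exists_eventually_norm_le_of_forall_le {ι X Y : Type*} [SeminormedAddCommGroup X]
    [SeminormedAddCommGroup Y] {l : Filter ι} {Φ : Y → X → ℝ≥0∞} {J : X → ℝ≥0∞}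
    {f : ι → Y} {f₀ : Y} {u : ι → X} {w₀ : X}
    (hw₀ : Φ f₀ w₀ + J w₀ < ⊤) (hΦ : Tendsto (fun g => Φ g w₀) (𝓝 f₀) (𝓝 (Φ f₀ w₀)))
    (hbound : ∀ a b : ℝ≥0∞, a ≠ ⊤ → b ≠ ⊤ → ∀ r : ℝ,
      ∃ C : ℝ, ∀ u : X, J u ≤ b → (∃ g : Y, ‖g‖ ≤ r ∧ Φ g u ≤ a) → ‖u‖ ≤ C)
    (hf : Tendsto f l (𝓝 f₀)) (hmin : ∀ i, Φ (f i) (u i) + J (u i) ≤ Φ (f i) w₀ + J w₀) :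
    ∃ C : ℝ, ∀ᶠ i in l, ‖u i‖ ≤ C := by
  obtain ⟨hΦw₀, hJw₀⟩ := ENNReal.add_lt_top.1 hw₀
  set M := Φ f₀ w₀ + 1 + J w₀
  have hM : M ≠ ⊤ := by simp [M, hΦw₀.ne, hJw₀.ne]
  obtain ⟨C, hC⟩ := hbound M M hM hM (‖f₀‖ + 1)
  have hΦ_ev : ∀ᶠ i in l, Φ (f i) w₀ < Φ f₀ w₀ + 1 :=
    (hΦ.comp hf).eventually_lt_const (ENNReal.lt_add_right hΦw₀.ne one_ne_zero)
  have hnorm_ev : ∀ᶠ i in l, ‖f i‖ < ‖f₀‖ + 1 := hf.norm.eventually_lt_const (lt_add_one _)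
  refine ⟨C, ?_⟩
  filter_upwards [hΦ_ev, hnorm_ev] with i hΦi hnormi
  have hval : Φ (f i) (u i) + J (u i) ≤ M := (hmin i).trans (add_le_add_left hΦi.le _)
  exact hC (u i) (le_add_self.trans hval) ⟨f i, hnormi.le, le_self_add.trans hval⟩

theorem stmt_1_general
    {Z : Type*} [NormedAddCommGroup Z] [NormedSpace ℝ Z] [TopologicalSpace.SeparableSpace Z]
    {Y : Type*} [NormedAddCommGroup Y] [InnerProductSpace ℝ Y]
    (L : Y →L[ℝ] Z)
    (K : StrongDual ℝ Z → Y)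
    (hK : ∀ (u : StrongDual ℝ Z) (g : Y), ⟪K u, g⟫ = u (L g))
    (F : Y → Y → ℝ≥0∞)
    (hFlsc : ∀ (y : ℕ → Y) (y₀ : Y) (g : ℕ → Y) (g₀ : Y),
      (∀ h : Y, Tendsto (fun n => ⟪y n, h⟫) atTop (nhds ⟪y₀, h⟫)) →
      Tendsto g atTop (nhds g₀) →
      F y₀ g₀ ≤ liminf (fun n => F (y n) (g n)) atTop)
    (hFcont : ∀ y : Y, Continuous (fun g => F y g))
    (J : StrongDual ℝ Z → ℝ≥0∞)
    (hJlsc : ∀ (u : ℕ → StrongDual ℝ Z) (u₀ : StrongDual ℝ Z),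
      (∀ z : Z, Tendsto (fun n => u n z) atTop (nhds (u₀ z))) →
      J u₀ ≤ liminf (fun n => J (u n)) atTop)
    (hfinite : ∀ g : Y, ∃ u : StrongDual ℝ Z, F (K u) g + J u < ⊤)
    (hbound : ∀ a b : ℝ≥0∞, a ≠ ⊤ → b ≠ ⊤ → ∀ r : ℝ,
      ∃ C : ℝ, ∀ u : StrongDual ℝ Z, J u ≤ b →
        (∃ g : Y, ‖g‖ ≤ r ∧ F (K u) g ≤ a) → ‖u‖ ≤ C) :
    ∀ (f : ℕ → Y) (f₀ : Y), Tendsto f atTop (nhds f₀) →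
      ∀ u : ℕ → StrongDual ℝ Z,
        (∀ n, ∀ w : StrongDual ℝ Z,
          F (K (u n)) (f n) + J (u n) ≤ F (K w) (f n) + J w) →
        ∃ φ : ℕ → ℕ, StrictMono φ ∧
          ∃ ustar : StrongDual ℝ Z,
            (∀ z : Z, Tendsto (fun k => u (φ k) z) atTop (nhds (ustar z))) ∧
            (∀ w : StrongDual ℝ Z, F (K ustar) f₀ + J ustar ≤ F (K w) f₀ + J w) := by
  intro f f₀ hf u hmin
  obtain ⟨w₀, hw₀⟩ := hfinite f₀
  obtain ⟨C, hC⟩ := exists_eventually_norm_le_of_forall_le (Φ := fun g u => F (K u) g)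
    hw₀ ((hFcont _).tendsto f₀) hbound hf fun n => hmin n w₀
  obtain ⟨φ, hφ, ustar, hconv⟩ :=
    WeakDual.exists_subseq_tendsto_of_frequently_norm_le hC.frequently
  refine ⟨φ, hφ, ustar, hconv, fun w => ?_⟩
  have hfφ : Tendsto (f ∘ φ) atTop (𝓝 f₀) := hf.comp hφ.tendsto_atTop
  have hK_weak : ∀ h : Y, Tendsto (fun k => ⟪K (u (φ k)), h⟫) atTop (𝓝 ⟪K ustar, h⟫) :=
    fun h => by simpa only [hK] using hconv (L h)
  exact ENNReal.add_le_of_le_liminf_of_tendsto (hFlsc _ _ _ _ hK_weak hfφ) (hJlsc _ _ hconv)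
    (Eventually.of_forall fun k => hmin (φ k) w)
    ((((hFcont (K w)).tendsto f₀).comp hfφ).add tendsto_const_nhds)

/-- **Stability of variational regularization.**
Z is a separable real normed space, X := Z* its dual with the weak-* topology,
Y a real Hilbert space, L : Y → Z bounded linear and K : X → Y defined by
⟨Ku, g⟩ = u(Lg). F : Y × Y → [0, ∞] is proper convex in its first argument,
jointly lower semicontinuous along weakly convergent first arguments and norm
convergent second arguments, and norm-continuous in its second argument;
J : X → [0, ∞] is proper, convex and sequentially weak-* lower semicontinuous;
the variational problems are always feasible and appropriate sublevel sets are
norm-bounded. Then for f_n → f in Y and minimizers u_n of u ↦ F(Ku, f_n) + J(u)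
there is a subsequence converging weak-* to a minimizer of u ↦ F(Ku, f) + J(u). -/
theorem stmt_1
    {Z : Type*} [NormedAddCommGroup Z] [NormedSpace ℝ Z] [TopologicalSpace.SeparableSpace Z]
    {Y : Type*} [NormedAddCommGroup Y] [InnerProductSpace ℝ Y] [CompleteSpace Y]
    (L : Y →L[ℝ] Z)
    (K : StrongDual ℝ Z → Y)
    (hK : ∀ (u : StrongDual ℝ Z) (g : Y), ⟪K u, g⟫ = u (L g))
    (F : Y → Y → ℝ≥0∞)
    (hFproper : ∀ g : Y, ∃ y, F y g ≠ ⊤)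
    (hFconv : ∀ g : Y, ∀ y₁ y₂ : Y, ∀ t : ℝ, 0 ≤ t → t ≤ 1 →
      F (t • y₁ + (1 - t) • y₂) g
        ≤ ENNReal.ofReal t * F y₁ g + ENNReal.ofReal (1 - t) * F y₂ g)
    (hFlsc : ∀ (y : ℕ → Y) (y₀ : Y) (g : ℕ → Y) (g₀ : Y),
      (∀ h : Y, Tendsto (fun n => ⟪y n, h⟫) atTop (nhds ⟪y₀, h⟫)) →
      Tendsto g atTop (nhds g₀) →
      F y₀ g₀ ≤ liminf (fun n => F (y n) (g n)) atTop)
    (hFcont : ∀ y : Y, Continuous (fun g => F y g))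
    (J : StrongDual ℝ Z → ℝ≥0∞)
    (hJproper : ∃ u, J u ≠ ⊤)
    (hJconv : ∀ u₁ u₂ : StrongDual ℝ Z, ∀ t : ℝ, 0 ≤ t → t ≤ 1 →
      J (t • u₁ + (1 - t) • u₂) ≤ ENNReal.ofReal t * J u₁ + ENNReal.ofReal (1 - t) * J u₂)
    (hJlsc : ∀ (u : ℕ → StrongDual ℝ Z) (u₀ : StrongDual ℝ Z),
      (∀ z : Z, Tendsto (fun n => u n z) atTop (nhds (u₀ z))) →
      J u₀ ≤ liminf (fun n => J (u n)) atTop)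
    (hfinite : ∀ g : Y, ∃ u : StrongDual ℝ Z, F (K u) g + J u < ⊤)
    (hbound : ∀ a b : ℝ≥0∞, a ≠ ⊤ → b ≠ ⊤ → ∀ r : ℝ,
      ∃ C : ℝ, ∀ u : StrongDual ℝ Z, J u ≤ b →
        (∃ g : Y, ‖g‖ ≤ r ∧ F (K u) g ≤ a) → ‖u‖ ≤ C) :
    ∀ (f : ℕ → Y) (f₀ : Y), Tendsto f atTop (nhds f₀) →
      ∀ u : ℕ → StrongDual ℝ Z,
        (∀ n, ∀ w : StrongDual ℝ Z,
          F (K (u n)) (f n) + J (u n) ≤ F (K w) (f n) + J w) →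
        ∃ φ : ℕ → ℕ, StrictMono φ ∧
          ∃ ustar : StrongDual ℝ Z,
            (∀ z : Z, Tendsto (fun k => u (φ k) z) atTop (nhds (ustar z))) ∧
            (∀ w : StrongDual ℝ Z, F (K ustar) f₀ + J ustar ≤ F (K w) f₀ + J w) :=
  stmt_1_general L K hK F hFlsc hFcont J hJlsc hfinite hbound
end

section
/- Let J : X → ℝ ∪ {+∞} be proper and convex, let α > 0 and δ ≥ 0, and let u†, û ∈ X and f, f^δ, v ∈ Y satisfy: Ku† = f, (1/2)‖f − f^δ‖² ≤ δ, the source condition K*v ∈ ∂J(u†), and the optimality condition p̂ := (1/α) K*(f^δ − Kû) ∈ ∂J(û). Then the error estimate ⟨K*v − p̂, u† − û⟩ + (1/(2α))‖Kû − f^δ‖² ≤ δ/α + (α/2)‖v‖² holds; in particular, choosing α = √(2δ)/‖v‖ (for v ≠ 0) yields ⟨K*v − p̂, u† − û⟩ ≤ √(2δ)·‖v‖, i.e., the symmetric Bregman distance is O(√δ). -/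
/-!
Writing `e = f - fδ` and `r = K û - fδ`, the operator disappears: since `K (u† - û) = e - r`,
the pairing `⟨K*v - p̂, u† - û⟩` equals `⟨v, e - r⟩ + α⁻¹ ⟨r, e - r⟩`, and the gap between the
two sides of the estimate is `(1/(2α)) ‖e - α v - r‖² + (δ - ½‖e‖²)/α ≥ 0`.
The second claim is the first one at the parameter `α = √(2δ)/‖v‖` balancing `δ/α` and `α‖v‖²/2`.
-/

open scoped RealInnerProductSpace

/-- Subgradient of an extended-real-valued convex function:
p ∈ ∂J(v) means J(w) ≥ J(v) + ⟨p, w − v⟩ for all w. -/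
def ESubgradAt {X : Type*} [NormedAddCommGroup X] [InnerProductSpace ℝ X]
    (J : X → EReal) (p v : X) : Prop :=
  ∀ w, J v + (⟪p, w - v⟫ : ℝ) ≤ J w

lemma inner_sub_add_inner_sub_le {E : Type*} [NormedAddCommGroup E] [InnerProductSpace ℝ E]
    {α : ℝ} (hα : 0 < α) (e r v : E) :
    ⟪v, e - r⟫ + (1 / α) * ⟪r, e - r⟫ + (1 / (2 * α)) * ‖r‖ ^ 2
      ≤ (1 / (2 * α)) * ‖e‖ ^ 2 + (α / 2) * ‖v‖ ^ 2 := by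
  have hgap : (1 / (2 * α)) * ‖e‖ ^ 2 + (α / 2) * ‖v‖ ^ 2
      - (⟪v, e - r⟫ + (1 / α) * ⟪r, e - r⟫ + (1 / (2 * α)) * ‖r‖ ^ 2)
      = (1 / (2 * α)) * ‖e - α • v - r‖ ^ 2 := by
    simp only [← real_inner_self_eq_norm_sq, inner_sub_left, inner_sub_right,
      real_inner_smul_left, real_inner_smul_right, real_inner_comm e, real_inner_comm r v]
    field_simp
    ring
  have : 0 ≤ (1 / (2 * α)) * ‖e - α • v - r‖ ^ 2 := by positivity
  linarith

lemma inner_adjoint_sub_smul_adjoint_eq {X Y : Type*}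
    [NormedAddCommGroup X] [InnerProductSpace ℝ X] [CompleteSpace X]
    [NormedAddCommGroup Y] [InnerProductSpace ℝ Y] [CompleteSpace Y]
    (K : X →L[ℝ] Y) (α : ℝ) (u u' : X) (g v : Y) :
    ⟪ContinuousLinearMap.adjoint K v - (1 / α) • ContinuousLinearMap.adjoint K (g - K u'),
        u - u'⟫
      = ⟪v, (K u - g) - (K u' - g)⟫ + (1 / α) * ⟪K u' - g, (K u - g) - (K u' - g)⟫ := by
  have hK : K (u - u') = (K u - g) - (K u' - g) := by rw [map_sub]; abel
  have hg : g - K u' = -(K u' - g) := by abel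
  rw [inner_sub_left, real_inner_smul_left, ContinuousLinearMap.adjoint_inner_left,
    ContinuousLinearMap.adjoint_inner_left, hK, hg, inner_neg_left]
  ring

/-- At `δ = 0` both sides vanish, thanks to the convention `δ / 0 = 0`. -/
lemma div_sqrt_div_add_mul_sq_eq {δ n : ℝ} (hδ : 0 ≤ δ) (hn : n ≠ 0) :
    δ / (√(2 * δ) / n) + (√(2 * δ) / n / 2) * n ^ 2 = √(2 * δ) * n := by
  rcases hδ.eq_or_lt with rfl | hδpos
  · simp
  set s := √(2 * δ)
  have hs : s ≠ 0 := (Real.sqrt_pos.2 (by linarith)).ne'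
  have hsq : s ^ 2 = 2 * δ := Real.sq_sqrt (by linarith)
  field_simp
  linear_combination -hsq

theorem stmt_7_general
    {X Y : Type*} [NormedAddCommGroup X] [InnerProductSpace ℝ X] [CompleteSpace X]
    [NormedAddCommGroup Y] [InnerProductSpace ℝ Y] [CompleteSpace Y]
    (K : X →L[ℝ] Y)
    (α δ : ℝ) (hα : 0 < α) (hδ : 0 ≤ δ)
    (udag uhat : X) (f fδ : Y) (v : Y)
    (hdata : K udag = f)
    (hnoise : (1 / 2) * ‖f - fδ‖ ^ 2 ≤ δ) :
    ⟪ContinuousLinearMap.adjoint K v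
        - (1 / α) • ContinuousLinearMap.adjoint K (fδ - K uhat), udag - uhat⟫
        + (1 / (2 * α)) * ‖K uhat - fδ‖ ^ 2
      ≤ δ / α + (α / 2) * ‖v‖ ^ 2
    ∧ (v ≠ 0 → α = Real.sqrt (2 * δ) / ‖v‖ →
        ⟪ContinuousLinearMap.adjoint K v
            - (1 / α) • ContinuousLinearMap.adjoint K (fδ - K uhat), udag - uhat⟫
          ≤ Real.sqrt (2 * δ) * ‖v‖) := by
  have hnoise_term : (1 / (2 * α)) * ‖f - fδ‖ ^ 2 ≤ δ / α := by
    rw [le_div_iff₀ hα]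
    field_simp
    linarith
  have estimate : ⟪ContinuousLinearMap.adjoint K v
        - (1 / α) • ContinuousLinearMap.adjoint K (fδ - K uhat), udag - uhat⟫
        + (1 / (2 * α)) * ‖K uhat - fδ‖ ^ 2 ≤ δ / α + (α / 2) * ‖v‖ ^ 2 := by
    rw [inner_adjoint_sub_smul_adjoint_eq, hdata]
    linarith [inner_sub_add_inner_sub_le hα (f - fδ) (K uhat - fδ) v]
  refine ⟨estimate, fun hv hαeq => ?_⟩
  have hbalanced : δ / α + (α / 2) * ‖v‖ ^ 2 = √(2 * δ) * ‖v‖ := by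
    rw [hαeq]
    exact div_sqrt_div_add_mul_sq_eq hδ (norm_ne_zero_iff.2 hv)
  have hresidual : 0 ≤ (1 / (2 * α)) * ‖K uhat - fδ‖ ^ 2 := by positivity
  linarith

/-- **Error estimate under the source condition for quadratic-fidelity Tikhonov
regularization.** If Ku† = f, ½‖f − f^δ‖² ≤ δ, K*v ∈ ∂J(u†) and
p̂ := (1/α)K*(f^δ − Kû) ∈ ∂J(û), then
⟨K*v − p̂, u† − û⟩ + (1/(2α))‖Kû − f^δ‖² ≤ δ/α + (α/2)‖v‖²;
in particular for α = √(2δ)/‖v‖ (v ≠ 0) the symmetric Bregman distance satisfies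
⟨K*v − p̂, u† − û⟩ ≤ √(2δ)‖v‖. -/
theorem stmt_7
    {X Y : Type*} [NormedAddCommGroup X] [InnerProductSpace ℝ X] [CompleteSpace X]
    [NormedAddCommGroup Y] [InnerProductSpace ℝ Y] [CompleteSpace Y]
    (K : X →L[ℝ] Y)
    (J : X → EReal)
    (hJbot : ∀ u, J u ≠ ⊥)
    (hJproper : ∃ u, J u ≠ ⊤)
    (hJconv : ∀ u v : X, ∀ t : ℝ, 0 ≤ t → t ≤ 1 →
      J (t • u + (1 - t) • v) ≤ (t : EReal) * J u + ((1 - t : ℝ) : EReal) * J v)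
    (α δ : ℝ) (hα : 0 < α) (hδ : 0 ≤ δ)
    (udag uhat : X) (f fδ : Y) (v : Y)
    (hdata : K udag = f)
    (hnoise : (1 / 2) * ‖f - fδ‖ ^ 2 ≤ δ)
    (hsource : ESubgradAt J (ContinuousLinearMap.adjoint K v) udag)
    (hopt : ESubgradAt J ((1 / α) • ContinuousLinearMap.adjoint K (fδ - K uhat)) uhat) :
    ⟪ContinuousLinearMap.adjoint K v
        - (1 / α) • ContinuousLinearMap.adjoint K (fδ - K uhat), udag - uhat⟫
        + (1 / (2 * α)) * ‖K uhat - fδ‖ ^ 2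
      ≤ δ / α + (α / 2) * ‖v‖ ^ 2
    ∧ (v ≠ 0 → α = Real.sqrt (2 * δ) / ‖v‖ →
        ⟪ContinuousLinearMap.adjoint K v
            - (1 / α) • ContinuousLinearMap.adjoint K (fδ - K uhat), udag - uhat⟫
          ≤ Real.sqrt (2 * δ) * ‖v‖) :=
  stmt_7_general K α δ hα hδ udag uhat f fδ v hdata hnoise
end

section
/- Let F : Y → [0, +∞) be convex, let J : X → ℝ ∪ {+∞} be proper and convex, and consider Bregman iterates: sequences (u^k) in X and (p^k) with p^k ∈ ∂J(u^k) such that for every k ≥ 0 the point u^{k+1} minimizes u ↦ F(Ku) + D_J^{p^k}(u, u^k) over X, where D_J^{p^k}(u, u^k) := J(u) − J(u^k) − ⟨p^k, u − u^k⟩. If F(Ku⁰) < ∞, then for every k ≥ 0 one has the monotone decrease F(Ku^{k+1}) + D_J^{p^k}(u^{k+1}, u^k) ≤ F(Ku^k), consequently for every N ≥ 1 one has ∑_{k=0}^{N−1} D_J^{p^k}(u^{k+1}, u^k) ≤ F(Ku⁰), and therefore D_J^{p^k}(u^{k+1}, u^k) → 0 as k → ∞. -/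
/-
Testing the minimality of `u^{k+1}` against the competitor `w = u^k`, whose Bregman distance to
itself vanishes, gives `F(Ku^{k+1}) + D_k ≤ F(Ku^k)` with `D_k := D_J^{p^k}(u^{k+1}, u^k)`.
Since `D_k ≥ 0` by the subgradient inequality, summing telescopes to
`∑_{k<N} D_k + F(Ku^N) ≤ F(Ku^0)`, and `F ≥ 0` bounds the partial sums. Hence `∑ D_k` converges and
its terms tend to `0`. A subgradient at `u^k` together with one point where `J < ∞` forces
`J(u^k)` to be finite, which keeps the extended-real arithmetic (`⊤ - ⊤ = ⊥`) out of the way.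
-/

open scoped RealInnerProductSpace
open Filter

/-- Generalized Bregman distance D_J^p(u, v) := J(u) − J(v) − ⟨p, u − v⟩. -/
noncomputable def ebreg {X : Type*} [NormedAddCommGroup X] [InnerProductSpace ℝ X]
    (J : X → EReal) (p u v : X) : EReal :=
  J u - J v - (⟪p, u - v⟫ : ℝ)

lemma EReal.exists_eq_coe_of_coe_add_le {a b : ℝ} {x : EReal} (hx : x ≠ ⊥)
    (h : (a : EReal) + x ≤ b) : ∃ d : ℝ, x = d := by
  induction x with
  | bot => exact absurd rfl hx
  | coe d => exact ⟨d, rfl⟩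
  | top => simp at h

lemma Finset.sum_range_add_le_of_add_le {M : Type*} [AddCommMonoid M] [PartialOrder M]
    [IsOrderedAddMonoid M] {a d : ℕ → M} (h : ∀ k, a (k + 1) + d k ≤ a k) (N : ℕ) :
    ∑ k ∈ Finset.range N, d k + a N ≤ a 0 := by
  induction N with
  | zero => simp
  | succ n ih =>
    calc ∑ k ∈ Finset.range (n + 1), d k + a (n + 1)
        = ∑ k ∈ Finset.range n, d k + (a (n + 1) + d n) := by
          rw [Finset.sum_range_succ]; abel
      _ ≤ ∑ k ∈ Finset.range n, d k + a n := by gcongr; exact h n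
      _ ≤ a 0 := ih

lemma tendsto_zero_of_add_le {a d : ℕ → ℝ} (ha : ∀ k, 0 ≤ a k) (hd : ∀ k, 0 ≤ d k)
    (h : ∀ k, a (k + 1) + d k ≤ a k) : Tendsto d atTop (nhds 0) :=
  (summable_of_sum_range_le hd fun N => by
    linarith [Finset.sum_range_add_le_of_add_le h N, ha N]).tendsto_atTop_zero

section Bregman

variable {X : Type*} [NormedAddCommGroup X] [InnerProductSpace ℝ X] {J : X → EReal} {p u v w : X}

lemma ESubgradAt.ne_top (h : ESubgradAt J p v) (hw : J w ≠ ⊤) : J v ≠ ⊤ := by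
  intro hv
  have := h w
  rw [hv, EReal.top_add_coe, top_le_iff] at this
  exact hw this

lemma ebreg_self (hv₀ : J v ≠ ⊥) (hv₁ : J v ≠ ⊤) : ebreg J p v v = 0 := by
  simp [ebreg, EReal.sub_self hv₁ hv₀]

lemma ESubgradAt.ebreg_nonneg (h : ESubgradAt J p v) (hv₀ : J v ≠ ⊥) (hv₁ : J v ≠ ⊤) :
    0 ≤ ebreg J p u v := by
  lift J v to ℝ using ⟨hv₁, hv₀⟩ with r hr
  have hsub := h u
  rw [← hr] at hsub
  rw [ebreg, ← hr, EReal.sub_nonneg (.inr (EReal.coe_ne_top _)) (.inr (EReal.coe_ne_bot _)),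
    EReal.le_sub_iff_add_le (.inl (EReal.coe_ne_bot _)) (.inl (EReal.coe_ne_top _)), add_comm]
  exact hsub

end Bregman

theorem stmt_8_general
    {X Y : Type*} [NormedAddCommGroup X] [InnerProductSpace ℝ X]
    [NormedAddCommGroup Y] [InnerProductSpace ℝ Y]
    (K : X →L[ℝ] Y)
    (F : Y → ℝ) (hFnonneg : ∀ y, 0 ≤ F y)
    (J : X → EReal)
    (hJbot : ∀ u, J u ≠ ⊥)
    (hJproper : ∃ u, J u ≠ ⊤)
    (u p : ℕ → X)
    (hsub : ∀ k, ESubgradAt J (p k) (u k))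
    (hmin : ∀ k, ∀ w : X,
      (F (K (u (k + 1))) : EReal) + ebreg J (p k) (u (k + 1)) (u k)
        ≤ (F (K w) : EReal) + ebreg J (p k) w (u k)) :
    (∀ k, (F (K (u (k + 1))) : EReal) + ebreg J (p k) (u (k + 1)) (u k)
        ≤ (F (K (u k)) : EReal))
    ∧ (∀ N : ℕ, 1 ≤ N →
        ∑ k ∈ Finset.range N, ebreg J (p k) (u (k + 1)) (u k) ≤ (F (K (u 0)) : EReal))
    ∧ Tendsto (fun k => ebreg J (p k) (u (k + 1)) (u k)) atTop (nhds 0) := by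
  obtain ⟨u₀, hu₀⟩ := hJproper
  have hfin k : J (u k) ≠ ⊤ := (hsub k).ne_top hu₀
  have hdesc k : (F (K (u (k + 1))) : EReal) + ebreg J (p k) (u (k + 1)) (u k)
      ≤ F (K (u k)) := by
    simpa [ebreg_self (hJbot _) (hfin k)] using hmin k (u k)
  have hnonneg k : 0 ≤ ebreg J (p k) (u (k + 1)) (u k) :=
    (hsub k).ebreg_nonneg (hJbot _) (hfin k)
  refine ⟨hdesc, fun N _ => ?_, ?_⟩
  · calc ∑ k ∈ Finset.range N, ebreg J (p k) (u (k + 1)) (u k)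
        ≤ ∑ k ∈ Finset.range N, ebreg J (p k) (u (k + 1)) (u k) + F (K (u N)) :=
          le_add_of_nonneg_right (EReal.coe_nonneg.mpr (hFnonneg _))
      _ ≤ F (K (u 0)) := Finset.sum_range_add_le_of_add_le
            (a := fun k => (F (K (u k)) : EReal)) hdesc N
  · choose d hd using fun k =>
      EReal.exists_eq_coe_of_coe_add_le (ne_bot_of_le_ne_bot (by simp) (hnonneg k)) (hdesc k)
    have hd_nonneg k : 0 ≤ d k := EReal.coe_nonneg.mp (hd k ▸ hnonneg k)
    have hd_desc k : F (K (u (k + 1))) + d k ≤ F (K (u k)) := by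
      simpa [hd k, ← EReal.coe_add] using hdesc k
    simp_rw [hd, ← EReal.coe_zero]
    exact EReal.tendsto_coe.mpr (tendsto_zero_of_add_le
      (a := fun k => F (K (u k))) (fun _ => hFnonneg _) hd_nonneg hd_desc)

/-- **Monotone decrease of the data fidelity along the Bregman iteration.**
F : Y → [0, ∞) convex, J proper convex, and u^{k+1} minimizes
u ↦ F(Ku) + D_J^{p^k}(u, u^k) with p^k ∈ ∂J(u^k). Then
F(Ku^{k+1}) + D_J^{p^k}(u^{k+1}, u^k) ≤ F(Ku^k) for all k, the Bregman distances of
consecutive iterates have partial sums bounded by F(Ku⁰), and they tend to 0. -/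
theorem stmt_8
    {X Y : Type*} [NormedAddCommGroup X] [InnerProductSpace ℝ X] [CompleteSpace X]
    [NormedAddCommGroup Y] [InnerProductSpace ℝ Y] [CompleteSpace Y]
    (K : X →L[ℝ] Y)
    (F : Y → ℝ) (hFconv : ConvexOn ℝ Set.univ F) (hFnonneg : ∀ y, 0 ≤ F y)
    (J : X → EReal)
    (hJbot : ∀ u, J u ≠ ⊥)
    (hJproper : ∃ u, J u ≠ ⊤)
    (hJconv : ∀ u v : X, ∀ t : ℝ, 0 ≤ t → t ≤ 1 →
      J (t • u + (1 - t) • v) ≤ (t : EReal) * J u + ((1 - t : ℝ) : EReal) * J v)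
    (u p : ℕ → X)
    (hsub : ∀ k, ESubgradAt J (p k) (u k))
    (hmin : ∀ k, ∀ w : X,
      (F (K (u (k + 1))) : EReal) + ebreg J (p k) (u (k + 1)) (u k)
        ≤ (F (K w) : EReal) + ebreg J (p k) w (u k)) :
    (∀ k, (F (K (u (k + 1))) : EReal) + ebreg J (p k) (u (k + 1)) (u k)
        ≤ (F (K (u k)) : EReal))
    ∧ (∀ N : ℕ, 1 ≤ N →
        ∑ k ∈ Finset.range N, ebreg J (p k) (u (k + 1)) (u k) ≤ (F (K (u 0)) : EReal))
    ∧ Tendsto (fun k => ebreg J (p k) (u (k + 1)) (u k)) atTop (nhds 0) :=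
  stmt_8_general K F hFnonneg J hJbot hJproper u p hsub hmin
end

section
/- Let J : X → ℝ be convex and absolutely one-homogeneous, i.e., J(c u) = |c| J(u) for all c ∈ ℝ and u ∈ X, and let σ > 0 and u_σ, v_σ with Ku_σ = σ v_σ be a generalized singular system for the quadratic fidelity, i.e., K*v_σ ∈ ∂J(u_σ). Then J(u_σ) = ⟨K*v_σ, u_σ⟩, and for every t ∈ [0, 1] one has t K*v_σ ∈ ∂J(0); moreover K*v_σ ∈ ∂J(u_σ/σ). (Hence the pair u(t) = 0, p(t) = t K*v_σ for 0 ≤ t ≤ 1 and u(t) = u_σ/σ, p(t) = K*v_σ for t ≥ 1 solves the inverse scale space flow ∂_t p(t) = K*(v_σ − Ku(t)), p(t) ∈ ∂J(u(t)), with data f = v_σ.) -/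
open scoped RealInnerProductSpace

/-- Subgradient of a real-valued convex function:
p ∈ ∂J(v) means J(w) ≥ J(v) + ⟨p, w − v⟩ for all w. -/
def RSubgradAt {X : Type*} [NormedAddCommGroup X] [InnerProductSpace ℝ X]
    (J : X → ℝ) (p v : X) : Prop :=
  ∀ w, J v + ⟪p, w - v⟫ ≤ J w

/-!
For an absolutely one-homogeneous `J`, testing the subgradient inequality at `w = 0` and
`w = 2v` gives `J v = ⟪p, v⟫`, so `p ∈ ∂J(v)` says exactly that `⟪p, ·⟫ ≤ J` with equality
at `v`. Both conditions survive scaling `v` by `c ≥ 0`, and the first one survives scaling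
`p` by `|t| ≤ 1` because `J` is even.
-/

namespace RSubgradAt

variable {X : Type*} [NormedAddCommGroup X] [InnerProductSpace ℝ X]
  {J : X → ℝ} {p v : X}

theorem iff_of_abs_homogeneous (hJ : ∀ (c : ℝ) (x : X), J (c • x) = |c| * J x) :
    RSubgradAt J p v ↔ (∀ w, ⟪p, w⟫ ≤ J w) ∧ J v = ⟪p, v⟫ := by
  have hJ0 : J 0 = 0 := by simpa using hJ 0 0
  constructor
  · intro h
    have hle : J v ≤ ⟪p, v⟫ := by
      have := h 0
      rw [hJ0, zero_sub, inner_neg_right] at this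
      linarith
    have hge : ⟪p, v⟫ ≤ J v := by
      have := h ((2 : ℝ) • v)
      rw [hJ, two_smul, add_sub_cancel_right] at this
      norm_num at this
      linarith
    refine ⟨fun w => ?_, le_antisymm hle hge⟩
    have := h w
    rw [inner_sub_right] at this
    linarith
  · rintro ⟨hle, heq⟩ w
    rw [heq, inner_sub_right, add_sub_cancel]
    exact hle w

theorem apply_eq_inner (hJ : ∀ (c : ℝ) (x : X), J (c • x) = |c| * J x)
    (h : RSubgradAt J p v) : J v = ⟪p, v⟫ :=
  ((iff_of_abs_homogeneous hJ).1 h).2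

theorem smul_right (hJ : ∀ (c : ℝ) (x : X), J (c • x) = |c| * J x)
    (h : RSubgradAt J p v) {c : ℝ} (hc : 0 ≤ c) : RSubgradAt J p (c • v) := by
  obtain ⟨hle, heq⟩ := (iff_of_abs_homogeneous hJ).1 h
  refine (iff_of_abs_homogeneous hJ).2 ⟨hle, ?_⟩
  rw [hJ, abs_of_nonneg hc, heq, inner_smul_right]

theorem smul_at_zero_of_abs_le_one (hJ : ∀ (c : ℝ) (x : X), J (c • x) = |c| * J x)
    (h : RSubgradAt J p v) {t : ℝ} (ht : |t| ≤ 1) : RSubgradAt J (t • p) 0 := by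
  have hle := ((iff_of_abs_homogeneous hJ).1 h).1
  refine (iff_of_abs_homogeneous hJ).2 ⟨fun w => ?_, by simpa using hJ 0 0⟩
  have habs : |⟪p, w⟫| ≤ J w := by
    refine abs_le.2 ⟨?_, hle w⟩
    have := hle (-w)
    rw [inner_neg_right, ← neg_one_smul ℝ w, hJ] at this
    norm_num at this
    linarith
  calc ⟪t • p, w⟫ = t * ⟪p, w⟫ := real_inner_smul_left p w t
    _ ≤ |t| * |⟪p, w⟫| := by rw [← abs_mul]; exact le_abs_self _
    _ ≤ 1 * |⟪p, w⟫| := by gcongr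
    _ ≤ J w := by rw [one_mul]; exact habs

end RSubgradAt

theorem stmt_14_general
    {X Y : Type*} [NormedAddCommGroup X] [InnerProductSpace ℝ X] [CompleteSpace X]
    [NormedAddCommGroup Y] [InnerProductSpace ℝ Y] [CompleteSpace Y]
    (K : X →L[ℝ] Y)
    (J : X → ℝ)
    (hJhom : ∀ (c : ℝ) (x : X), J (c • x) = |c| * J x)
    (σ : ℝ) (hσ : 0 < σ) (uσ : X) (vσ : Y)
    (hsub : RSubgradAt J (ContinuousLinearMap.adjoint K vσ) uσ) :
    J uσ = ⟪ContinuousLinearMap.adjoint K vσ, uσ⟫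
    ∧ (∀ t : ℝ, 0 ≤ t → t ≤ 1 →
        RSubgradAt J (t • ContinuousLinearMap.adjoint K vσ) 0)
    ∧ RSubgradAt J (ContinuousLinearMap.adjoint K vσ) (σ⁻¹ • uσ) :=
  ⟨hsub.apply_eq_inner hJhom,
    fun _ ht0 ht1 => hsub.smul_at_zero_of_abs_le_one hJhom (abs_le.2 ⟨by linarith, ht1⟩),
    hsub.smul_right hJhom (inv_nonneg.2 hσ.le)⟩

/-- **Generalized singular vectors solve the inverse scale space flow without bias.**
J : X → ℝ convex and absolutely one-homogeneous, σ > 0, Ku_σ = σv_σ and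
K*v_σ ∈ ∂J(u_σ) (a generalized singular system for the quadratic fidelity). Then
J(u_σ) = ⟨K*v_σ, u_σ⟩, for every t ∈ [0, 1] one has tK*v_σ ∈ ∂J(0), and
K*v_σ ∈ ∂J(u_σ/σ). -/
theorem stmt_14
    {X Y : Type*} [NormedAddCommGroup X] [InnerProductSpace ℝ X] [CompleteSpace X]
    [NormedAddCommGroup Y] [InnerProductSpace ℝ Y] [CompleteSpace Y]
    (K : X →L[ℝ] Y)
    (J : X → ℝ) (hJconv : ConvexOn ℝ Set.univ J)
    (hJhom : ∀ (c : ℝ) (x : X), J (c • x) = |c| * J x)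
    (σ : ℝ) (hσ : 0 < σ) (uσ : X) (vσ : Y)
    (hsing : K uσ = σ • vσ)
    (hsub : RSubgradAt J (ContinuousLinearMap.adjoint K vσ) uσ) :
    J uσ = ⟪ContinuousLinearMap.adjoint K vσ, uσ⟫
    ∧ (∀ t : ℝ, 0 ≤ t → t ≤ 1 →
        RSubgradAt J (t • ContinuousLinearMap.adjoint K vσ) 0)
    ∧ RSubgradAt J (ContinuousLinearMap.adjoint K vσ) (σ⁻¹ • uσ) :=
  stmt_14_general K J hJhom σ hσ uσ vσ hsub
end

section
/- Let E : X → ℝ be Fréchet differentiable with gradient ∇E, let H : X → ℝ be Fréchet differentiable with gradient ∇H and γ-strongly convex (i.e., (γ/2)‖u − v‖² ≤ D_H(u, v) := H(u) − H(v) − ⟨∇H(v), u − v⟩ for all u, v), let L > 0 be such that (L/γ)H − E is convex, let J : X → ℝ ∪ {+∞} be proper and convex, and let ρ > 0. Suppose for a fixed k ≥ 1 the Bregman proximal gradient iterate satisfies the optimality condition: there exists p^k ∈ ∂J(u^k) with α^{k−1}(∇E(u^{k−1}) + p^k) = ∇H(u^{k−1}) − ∇H(u^k), where the step size satisfies 0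 < α^{k−1} and α^{k−1} (L/γ) D_H(u^k, u^{k−1}) + α^{k−1} ρ D_H^{symm}(u^k, u^{k−1}) ≤ D_H^{symm}(u^k, u^{k−1}) with D_H^{symm}(u, v) := ⟨∇H(u) − ∇H(v), u − v⟩. Then the sufficient decrease E(u^k) + J(u^k) + ρ D_H^{symm}(u^k, u^{k−1}) ≤ E(u^{k−1}) + J(u^{k−1}) holds. -/
open scoped RealInnerProductSpace

open AffineMap in
theorem ConvexOn.add_fderiv_sub_le {V : Type*} [NormedAddCommGroup V] [NormedSpace ℝ V]
    {F : V → ℝ} {F' : V →L[ℝ] ℝ} {S : Set V} {x y : V} (hF : ConvexOn ℝ S F)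
    (hx : x ∈ S) (hy : y ∈ S) (hF' : HasFDerivAt F F' x) :
    F x + F' (y - x) ≤ F y := by
  set ℓ : ℝ →ᵃ[ℝ] V := lineMap x y
  have hderiv : HasDerivAt (F ∘ ℓ) (F' (y - x)) 0 :=
    (by simpa [ℓ] using hF' : HasFDerivAt F F' (ℓ 0)).comp_hasDerivAt 0 hasDerivAt_lineMap
  have hslope := (hF.comp_affineMap ℓ).le_slope_of_hasDerivAt (by simpa [ℓ] using hx)
    (by simpa [ℓ] using hy) one_pos hderiv
  simp only [slope, Function.comp_apply, ℓ, lineMap_apply_zero, lineMap_apply_one, sub_zero,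
    inv_one, one_smul, vsub_eq_sub] at hslope
  linarith

section Bregman

variable {X : Type*} [NormedAddCommGroup X] [InnerProductSpace ℝ X] [CompleteSpace X]

def bregmanDist (H : X → ℝ) (gH : X → X) (u v : X) : ℝ :=
  H u - H v - ⟪gH v, u - v⟫

/-- Descent lemma for `E` that is `c`-smooth relative to `H`, i.e. with `c H - E` convex. -/
theorem le_add_inner_add_bregmanDist_of_convexOn {E H : X → ℝ} {gE gH : X → X} {c : ℝ}
    (hE : ∀ u, HasGradientAt E (gE u) u) (hH : ∀ u, HasGradientAt H (gH u) u)
    (hconv : ConvexOn ℝ Set.univ (fun u => c * H u - E u)) (u v : X) :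
    E u ≤ E v + ⟪gE v, u - v⟫ + c * bregmanDist H gH u v := by
  have hderiv := ((hH v).hasFDerivAt.const_mul c).sub (hE v).hasFDerivAt
  have := hconv.add_fderiv_sub_le (Set.mem_univ v) (Set.mem_univ u) hderiv
  simp only [_root_.sub_apply, _root_.smul_apply, smul_eq_mul,
    InnerProductSpace.toDual_apply_apply] at this
  unfold bregmanDist
  linarith

end Bregman

theorem EReal.coe_add_add_coe_le {a₀ a₁ : EReal} {x₀ x₁ q r : ℝ}
    (ha : a₁ + q ≤ a₀) (hx : x₁ + r ≤ x₀ + q) :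
    (x₁ : EReal) + a₁ + r ≤ x₀ + a₀ :=
  calc (x₁ : EReal) + a₁ + r = a₁ + ((x₁ + r : ℝ) : EReal) := by
        rw [EReal.coe_add, add_comm (x₁ : EReal), add_assoc]
    _ ≤ a₁ + ((x₀ + q : ℝ) : EReal) := by gcongr
    _ = x₀ + (a₁ + q) := by rw [EReal.coe_add, add_left_comm]
    _ ≤ x₀ + a₀ := by gcongr

theorem stmt_16_general
    {X : Type*} [NormedAddCommGroup X] [InnerProductSpace ℝ X] [CompleteSpace X]
    (E : X → ℝ) (gE : X → X) (hE : ∀ u, HasGradientAt E (gE u) u)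
    (H : X → ℝ) (gH : X → X) (hH : ∀ u, HasGradientAt H (gH u) u)
    (γ : ℝ)
    (L : ℝ)
    (hLconv : ConvexOn ℝ Set.univ (fun u => (L / γ) * H u - E u))
    (J : X → EReal)
    (ρ : ℝ)
    (u₀ u₁ p₁ : X) (hp₁ : ESubgradAt J p₁ u₁)
    (α : ℝ) (hα : 0 < α)
    (hopt : α • (gE u₀ + p₁) = gH u₀ - gH u₁)
    (hstep : α * (L / γ) * (H u₁ - H u₀ - ⟪gH u₀, u₁ - u₀⟫)
        + α * ρ * ⟪gH u₁ - gH u₀, u₁ - u₀⟫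
      ≤ ⟪gH u₁ - gH u₀, u₁ - u₀⟫) :
    ((E u₁ : ℝ) : EReal) + J u₁ + ((ρ * ⟪gH u₁ - gH u₀, u₁ - u₀⟫ : ℝ) : EReal)
      ≤ ((E u₀ : ℝ) : EReal) + J u₀ := by
  set S := ⟪gH u₁ - gH u₀, u₁ - u₀⟫
  have hdescent := le_add_inner_add_bregmanDist_of_convexOn hE hH hLconv u₁ u₀
  have hpaired : α * (⟪gE u₀, u₁ - u₀⟫ + ⟪p₁, u₁ - u₀⟫) = -S := by
    rw [← inner_add_left, ← real_inner_smul_left, hopt, ← inner_neg_left, neg_sub]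
  have hdecrease : ⟪gE u₀, u₁ - u₀⟫ + ⟪p₁, u₁ - u₀⟫
      + (L / γ) * bregmanDist H gH u₁ u₀ + ρ * S ≤ 0 := by
    refine nonpos_of_mul_nonpos_right ?_ hα
    unfold bregmanDist
    linarith
  have hinner_neg : ⟪p₁, u₀ - u₁⟫ = -⟪p₁, u₁ - u₀⟫ := by rw [← inner_neg_right, neg_sub]
  exact EReal.coe_add_add_coe_le (hp₁ u₀) (by linarith)

/-- **Sufficient decrease of the Bregman proximal gradient method.**
E, H : X → ℝ Fréchet differentiable with gradients ∇E, ∇H, H γ-strongly convex,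
(L/γ)H − E convex, J proper convex, ρ > 0. If p^k ∈ ∂J(u^k) satisfies the optimality
condition α^{k−1}(∇E(u^{k−1}) + p^k) = ∇H(u^{k−1}) − ∇H(u^k) with step size
0 < α^{k−1} and α^{k−1}(L/γ)D_H(u^k, u^{k−1}) + α^{k−1}ρD_H^{symm}(u^k, u^{k−1})
≤ D_H^{symm}(u^k, u^{k−1}), then
E(u^k) + J(u^k) + ρD_H^{symm}(u^k, u^{k−1}) ≤ E(u^{k−1}) + J(u^{k−1}). -/
theorem stmt_16
    {X : Type*} [NormedAddCommGroup X] [InnerProductSpace ℝ X] [CompleteSpace X]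
    (E : X → ℝ) (gE : X → X) (hE : ∀ u, HasGradientAt E (gE u) u)
    (H : X → ℝ) (gH : X → X) (hH : ∀ u, HasGradientAt H (gH u) u)
    (γ : ℝ) (hγ : 0 < γ)
    (hHsc : ∀ u v : X, (γ / 2) * ‖u - v‖ ^ 2 ≤ H u - H v - ⟪gH v, u - v⟫)
    (L : ℝ) (hL : 0 < L)
    (hLconv : ConvexOn ℝ Set.univ (fun u => (L / γ) * H u - E u))
    (J : X → EReal)
    (hJbot : ∀ u, J u ≠ ⊥)
    (hJproper : ∃ u, J u ≠ ⊤)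
    (hJconv : ∀ u v : X, ∀ t : ℝ, 0 ≤ t → t ≤ 1 →
      J (t • u + (1 - t) • v) ≤ (t : EReal) * J u + ((1 - t : ℝ) : EReal) * J v)
    (ρ : ℝ) (hρ : 0 < ρ)
    (u₀ u₁ p₁ : X) (hp₁ : ESubgradAt J p₁ u₁)
    (α : ℝ) (hα : 0 < α)
    (hopt : α • (gE u₀ + p₁) = gH u₀ - gH u₁)
    (hstep : α * (L / γ) * (H u₁ - H u₀ - ⟪gH u₀, u₁ - u₀⟫)
        + α * ρ * ⟪gH u₁ - gH u₀, u₁ - u₀⟫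
      ≤ ⟪gH u₁ - gH u₀, u₁ - u₀⟫) :
    ((E u₁ : ℝ) : EReal) + J u₁ + ((ρ * ⟪gH u₁ - gH u₀, u₁ - u₀⟫ : ℝ) : EReal)
      ≤ ((E u₀ : ℝ) : EReal) + J u₀ :=
  stmt_16_general E gE hE H gH hH γ L hLconv J ρ u₀ u₁ p₁ hp₁ α hα hopt hstep
end

section
/- Let E : X → ℝ be Fréchet differentiable with L-Lipschitz gradient ∇E, let H : X → ℝ be Fréchet differentiable with δ-Lipschitz gradient ∇H, let J : X → ℝ ∪ {+∞} be proper and convex, and let α^{k−1} > 0. Suppose the Bregman proximal gradient optimality condition holds: p^k ∈ ∂J(u^k) and α^{k−1}(∇E(u^{k−1}) + p^k) = ∇H(u^{k−1}) − ∇H(u^k). Then the optimality gap at the new iterate is controlled by the step: ‖∇E(u^k) + p^k‖ ≤ (L + δ/α^{k−1}) ‖u^k − u^{k−1}‖. -/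
open scoped RealInnerProductSpace

theorem norm_eq_norm_div_of_smul_eq {W : Type*} [SeminormedAddCommGroup W] [NormedSpace ℝ W]
    {α : ℝ} {x y : W} (hα : 0 < α) (h : α • x = y) : ‖x‖ = ‖y‖ / α := by
  rw [← h, norm_smul, Real.norm_of_nonneg hα.le, mul_div_cancel_left₀ _ hα.ne']

theorem stmt_17_general
    {X : Type*} [NormedAddCommGroup X] [InnerProductSpace ℝ X]
    (gE : X → X)
    (L : ℝ) (hgELip : ∀ u v : X, ‖gE u - gE v‖ ≤ L * ‖u - v‖)
    (gH : X → X)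
    (δ : ℝ) (hgHLip : ∀ u v : X, ‖gH u - gH v‖ ≤ δ * ‖u - v‖)
    (u₀ u₁ p₁ : X)
    (α : ℝ) (hα : 0 < α)
    (hopt : α • (gE u₀ + p₁) = gH u₀ - gH u₁) :
    ‖gE u₁ + p₁‖ ≤ (L + δ / α) * ‖u₁ - u₀‖ := by
  calc ‖gE u₁ + p₁‖ = ‖(gE u₁ - gE u₀) + (gE u₀ + p₁)‖ := by congr 1; abel
    _ ≤ ‖gE u₁ - gE u₀‖ + ‖gE u₀ + p₁‖ := norm_add_le _ _
    _ = ‖gE u₁ - gE u₀‖ + ‖gH u₁ - gH u₀‖ / α := by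
        rw [norm_eq_norm_div_of_smul_eq hα hopt, norm_sub_rev (gH u₀)]
    _ ≤ L * ‖u₁ - u₀‖ + δ * ‖u₁ - u₀‖ / α := by gcongr <;> [exact hgELip _ _; exact hgHLip _ _]
    _ = (L + δ / α) * ‖u₁ - u₀‖ := by ring

/-- **Control of the optimality gap of the Bregman proximal gradient method.**
E : X → ℝ Fréchet differentiable with L-Lipschitz gradient ∇E, H : X → ℝ Fréchet
differentiable with δ-Lipschitz gradient ∇H, J proper convex, α^{k−1} > 0. If
p^k ∈ ∂J(u^k) and α^{k−1}(∇E(u^{k−1}) + p^k) = ∇H(u^{k−1}) − ∇H(u^k), then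
‖∇E(u^k) + p^k‖ ≤ (L + δ/α^{k−1})‖u^k − u^{k−1}‖. -/
theorem stmt_17
    {X : Type*} [NormedAddCommGroup X] [InnerProductSpace ℝ X] [CompleteSpace X]
    (E : X → ℝ) (gE : X → X) (hE : ∀ u, HasGradientAt E (gE u) u)
    (L : ℝ) (hgELip : ∀ u v : X, ‖gE u - gE v‖ ≤ L * ‖u - v‖)
    (H : X → ℝ) (gH : X → X) (hH : ∀ u, HasGradientAt H (gH u) u)
    (δ : ℝ) (hgHLip : ∀ u v : X, ‖gH u - gH v‖ ≤ δ * ‖u - v‖)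
    (J : X → EReal)
    (hJbot : ∀ u, J u ≠ ⊥)
    (hJproper : ∃ u, J u ≠ ⊤)
    (hJconv : ∀ u v : X, ∀ t : ℝ, 0 ≤ t → t ≤ 1 →
      J (t • u + (1 - t) • v) ≤ (t : EReal) * J u + ((1 - t : ℝ) : EReal) * J v)
    (u₀ u₁ p₁ : X) (hp₁ : ESubgradAt J p₁ u₁)
    (α : ℝ) (hα : 0 < α)
    (hopt : α • (gE u₀ + p₁) = gH u₀ - gH u₁) :
    ‖gE u₁ + p₁‖ ≤ (L + δ / α) * ‖u₁ - u₀‖ :=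
  stmt_17_general gE L hgELip gH δ hgHLip u₀ u₁ p₁ α hα hopt
end

section
/- Let E : X → ℝ be Fréchet differentiable with gradient ∇E and let J : X → ℝ be convex such that its subdifferential is δ-strongly monotone in the dual sense: δ ‖p − q‖² ≤ ⟨p − q, u − v⟩ for all u, v ∈ X, p ∈ ∂J(u), q ∈ ∂J(v) (this is the strong convexity of the convex conjugate J*). Suppose for a fixed k ≥ 1 the nonconvex linearized Bregman iterates satisfy: p^{k−1} ∈ ∂J(u^{k−1}) and p^k := p^{k−1} − (1/α^{k−1}) ∇E(u^{k−1}) ∈ ∂J(u^k) for some step size α^{k−1} > 0. Then the gradient of E at the previous iterate is bounded by the step: ‖∇E(u^{k−1})‖ ≤ (α^{k−1}/δ) ‖u^k − u^{k−1}‖. -/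
open scoped RealInnerProductSpace

lemma mul_norm_le_norm_of_mul_norm_sq_le_inner {X : Type*} [NormedAddCommGroup X]
    [InnerProductSpace ℝ X] {x y : X} {δ : ℝ} (h : δ * ‖x‖ ^ 2 ≤ ⟪x, y⟫) :
    δ * ‖x‖ ≤ ‖y‖ := by
  rcases (norm_nonneg x).eq_or_lt with hx | hx
  · simp [← hx]
  · have hcs : δ * ‖x‖ * ‖x‖ ≤ ‖y‖ * ‖x‖ := by
      calc δ * ‖x‖ * ‖x‖ = δ * ‖x‖ ^ 2 := by ring
        _ ≤ ⟪x, y⟫ := h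
        _ ≤ ‖x‖ * ‖y‖ := real_inner_le_norm x y
        _ = ‖y‖ * ‖x‖ := mul_comm _ _
    exact le_of_mul_le_mul_right hcs hx

theorem stmt_19_general
    {X : Type*} [NormedAddCommGroup X] [InnerProductSpace ℝ X]
    (gE : X → X)
    (J : X → ℝ)
    (δ : ℝ) (hδ : 0 < δ)
    (hmono : ∀ u v p q : X, RSubgradAt J p u → RSubgradAt J q v →
      δ * ‖p - q‖ ^ 2 ≤ ⟪p - q, u - v⟫)
    (u₀ u₁ p₀ : X)
    (hp₀ : RSubgradAt J p₀ u₀)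
    (α : ℝ) (hα : 0 < α)
    (hp₁ : RSubgradAt J (p₀ - (1 / α) • gE u₀) u₁) :
    ‖gE u₀‖ ≤ (α / δ) * ‖u₁ - u₀‖ := by
  have hstep : δ * (1 / α * ‖gE u₀‖) ≤ ‖u₁ - u₀‖ := by
    have h := mul_norm_le_norm_of_mul_norm_sq_le_inner (hmono u₀ u₁ _ _ hp₀ hp₁)
    rwa [sub_sub_cancel, norm_smul, Real.norm_of_nonneg (by positivity), norm_sub_rev] at h
  rw [div_mul_eq_mul_div, le_div_iff₀ hδ]
  calc ‖gE u₀‖ * δ = α * (δ * (1 / α * ‖gE u₀‖)) := by field_simp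
    _ ≤ α * ‖u₁ - u₀‖ := by gcongr

/-- **Gradient bound for the linearized Bregman iteration for nonconvex
functionals.** E : X → ℝ Fréchet differentiable with gradient ∇E, J : X → ℝ convex
with δ-strongly monotone subdifferential (strong convexity of J*). If
p^{k−1} ∈ ∂J(u^{k−1}) and p^k := p^{k−1} − (1/α^{k−1})∇E(u^{k−1}) ∈ ∂J(u^k) for a step
size α^{k−1} > 0, then ‖∇E(u^{k−1})‖ ≤ (α^{k−1}/δ)‖u^k − u^{k−1}‖. -/
theorem stmt_19
    {X : Type*} [NormedAddCommGroup X] [InnerProductSpace ℝ X] [CompleteSpace X]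
    (E : X → ℝ) (gE : X → X) (hE : ∀ u, HasGradientAt E (gE u) u)
    (J : X → ℝ) (hJconv : ConvexOn ℝ Set.univ J)
    (δ : ℝ) (hδ : 0 < δ)
    (hmono : ∀ u v p q : X, RSubgradAt J p u → RSubgradAt J q v →
      δ * ‖p - q‖ ^ 2 ≤ ⟪p - q, u - v⟫)
    (u₀ u₁ p₀ : X)
    (hp₀ : RSubgradAt J p₀ u₀)
    (α : ℝ) (hα : 0 < α)
    (hp₁ : RSubgradAt J (p₀ - (1 / α) • gE u₀) u₁) :
    ‖gE u₀‖ ≤ (α / δ) * ‖u₁ - u₀‖ :=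
  stmt_19_general gE J δ hδ hmono u₀ u₁ p₀ hp₀ α hα hp₁
end
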